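/- arXiv:1311.1573 — 4 statements merged into one kernel-verified Lean document; each statement's English description precedes it below -/
import Mathlib

section
/- Let $R$ be a Noetherian local ring and $\mathfrak{p}$ a prime ideal. Every element $x$ of the injective hull $E_R(R/\mathfrak{p})$ is annihilated by some power of $\mathfrak{p}$, i.e. there exists $n \in \mathbb{N}$ with $\mathfrak{p}^n x = 0$. -/
/-!
Let `N` be the image of `R ⧸ p` in `E`, so `p` kills `N` and `N` is essential in `E`. Fix `x : E`
and `a ∈ p`. The annihilators of `a ^ n • x` form an ascending chain of ideals, which
stabilises at some `n`. If `a ^ n • x ≠ 0`, essentiality gives `s` with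
`0 ≠ s • a ^ n • x ∈ N`; then `a` kills it, so `s` annihilates `a ^ (n + 1) • x`, hence
`a ^ n • x`: a contradiction. Thus `p` lies in the radical of the annihilator of `x`, and since
`p` is finitely generated, a power of `p` lies in the annihilator itself.
-/

/-- `f : M →ₗ[R] E` exhibits `E` as an injective hull (injective envelope) of `M`:
`E` is an injective `R`-module and `f` embeds `M` as an essential submodule of `E`. -/
def IsInjectiveHull (R : Type*) [CommRing R] {M E : Type*} [AddCommGroup M] [Module R M]
    [AddCommGroup E] [Module R E] (f : M →ₗ[R] E) : Prop :=
  Module.Injective R E ∧ Function.Injective f ∧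
    ∀ N : Submodule R E, N ≠ ⊥ → N ⊓ LinearMap.range f ≠ ⊥

theorem Ideal.le_annihilator_range {R M : Type*} [CommRing R] [AddCommGroup M] [Module R M]
    {I : Ideal R} (f : (R ⧸ I) →ₗ[R] M) : I ≤ (LinearMap.range f).annihilator :=
  I.annihilator_quotient.ge.trans
    (f.rangeRestrict.annihilator_le_of_surjective f.surjective_rangeRestrict)

namespace Submodule

variable {R M : Type*} [CommRing R] [AddCommGroup M] [Module R M]

def IsEssential (N : Submodule R M) : Prop :=
  ∀ L : Submodule R M, L ≠ ⊥ → L ⊓ N ≠ ⊥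

theorem exists_annihilator_span_pow_succ_smul_eq [IsNoetherianRing R] (a : R) (x : M) :
    ∃ n : ℕ, (R ∙ (a ^ (n + 1) • x)).annihilator = (R ∙ (a ^ n • x)).annihilator := by
  let chain : ℕ →o Ideal R :=
    ⟨fun n ↦ (R ∙ (a ^ n • x)).annihilator, monotone_nat_of_le_succ fun n r hr ↦ by
      rw [mem_annihilator_span_singleton] at hr ⊢
      rw [pow_succ', mul_smul, smul_comm, hr, smul_zero]⟩
  obtain ⟨n, hn⟩ := monotone_stabilizes_iff_noetherian.mpr inferInstance chain
  exact ⟨n, (hn (n + 1) n.le_succ).symm⟩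

variable [IsNoetherianRing R] {N : Submodule R M}

theorem IsEssential.annihilator_le_radical_annihilator_span (hN : N.IsEssential) (x : M) :
    N.annihilator ≤ (R ∙ x).annihilator.radical := by
  intro a ha
  obtain ⟨n, hn⟩ := exists_annihilator_span_pow_succ_smul_eq a x
  refine ⟨n, (mem_annihilator_span_singleton _ _).mpr ?_⟩
  by_contra hy
  obtain ⟨z, ⟨hzy, hzN⟩, hz⟩ :=
    (Submodule.ne_bot_iff _).mp (hN _ (mt span_singleton_eq_bot.mp hy))
  obtain ⟨s, rfl⟩ := mem_span_singleton.mp hzy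
  have hs : s ∈ (R ∙ (a ^ (n + 1) • x)).annihilator := by
    rw [mem_annihilator_span_singleton, pow_succ', mul_smul, smul_comm]
    exact mem_annihilator.mp ha _ hzN
  rw [hn, mem_annihilator_span_singleton] at hs
  exact hz hs

theorem IsEssential.exists_pow_annihilator_le_annihilator_span (hN : N.IsEssential) (x : M) :
    ∃ n : ℕ, N.annihilator ^ n ≤ (R ∙ x).annihilator :=
  Ideal.exists_pow_le_of_le_radical_of_fg (hN.annihilator_le_radical_annihilator_span x)
    (IsNoetherian.noetherian _)

end Submodule

theorem every_element_of_injective_hull_is_prime_power_torsion_general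
    {R : Type*} [CommRing R] [IsNoetherianRing R]
    (p : Ideal R) {E : Type*} [AddCommGroup E] [Module R E]
    (f : (R ⧸ p) →ₗ[R] E) (hf : IsInjectiveHull R f) (x : E) :
    ∃ n : ℕ, ∀ r ∈ p ^ n, r • x = 0 := by
  have hess : (LinearMap.range f).IsEssential := hf.2.2
  obtain ⟨n, hn⟩ := hess.exists_pow_annihilator_le_annihilator_span x
  refine ⟨n, fun r hr ↦ (Submodule.mem_annihilator_span_singleton x r).mp (hn ?_)⟩
  exact Ideal.pow_right_mono (Ideal.le_annihilator_range f) n hr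

theorem every_element_of_injective_hull_is_prime_power_torsion
    {R : Type*} [CommRing R] [IsNoetherianRing R] [IsLocalRing R]
    (p : Ideal R) [p.IsPrime] {E : Type*} [AddCommGroup E] [Module R E]
    (f : (R ⧸ p) →ₗ[R] E) (hf : IsInjectiveHull R f) (x : E) :
    ∃ n : ℕ, ∀ r ∈ p ^ n, r • x = 0 :=
  every_element_of_injective_hull_is_prime_power_torsion_general p f hf x
end

section
/- Let $R$ be a Noetherian local ring and $\mathfrak{p}$ a prime ideal. The injective hull $E_R(R/\mathfrak{p})$ admits a module structure over the $\mathfrak{p}$-adic completion $\hat{R}^{\mathfrak{p}}$ extending its $R$-module structure, defined by $\hat{r} \cdot x = r x$ whenever $\mathfrak{p}^n x = 0$ and $\hat{r} - r \in \mathfrak{p}^n \hat{R}^{\mathfrak{p}}$. -/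
/-- A module structure on `E` over the `p`-adic completion `R̂ᵖ = AdicCompletion p R`
extends the `R`-module structure and is given by the rule `r̂ • x = r • x` whenever
`pⁿ • x = 0` and `r̂ - r ∈ pⁿ R̂ᵖ`. -/
def IsCanonicalCompletionStructure {R : Type*} [CommRing R] (p : Ideal R)
    (E : Type*) [AddCommGroup E] [Module R E]
    [inst : Module (AdicCompletion p R) E] : Prop :=
  (∀ (r : R) (x : E), (algebraMap R (AdicCompletion p R) r) • x = r • x) ∧
    ∀ (a : AdicCompletion p R) (x : E) (n : ℕ) (r : R),
      (∀ c ∈ p ^ n, c • x = 0) →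
      a - algebraMap R (AdicCompletion p R) r ∈
        (p ^ n).map (algebraMap R (AdicCompletion p R)) →
      a • x = r • x

/-!
Every element `x` of `E` is killed by a power of `p`. Indeed, any associated prime `Q` of `E`
comes with an embedding `R ⧸ Q ↪ E`, whose image meets the essential submodule `R ⧸ p`; a nonzero
element of the intersection has annihilator both `Q` and `p`, so `p` is the only associated prime
of `E`. The minimal primes of the annihilator of `x` are associated primes of `R ∙ x ⊆ E`, hence
the radical of this annihilator contains `p`, and `p` is finitely generated.

On a `p`-power-torsion module the completion acts by `a • x = r • x`, where `p ^ n` kills `x` and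
`r ∈ R` represents the image of `a` in `R ⧸ p ^ n`; this is independent of the choices because
representatives at different levels agree modulo the smaller power of `p`.
-/

open Function

section AssociatedPrimes

variable {R E : Type*} [CommRing R] [AddCommGroup E] [Module R E]

theorem torsionOf_apply_eq_of_injective {P : Ideal R} [P.IsPrime] {g : R ⧸ P →ₗ[R] E}
    (hg : Injective g) {u : R ⧸ P} (hu : u ≠ 0) : Ideal.torsionOf R E (g u) = P := by
  ext r
  rw [Ideal.mem_torsionOf_iff, ← map_smul, map_eq_zero_iff g hg, Algebra.smul_def,
    Ideal.Quotient.algebraMap_eq, mul_eq_zero, or_iff_left hu, Ideal.Quotient.eq_zero_iff_mem]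

theorem associatedPrimes_subset_singleton_of_essential [IsNoetherianRing R] {p : Ideal R}
    [p.IsPrime] {f : R ⧸ p →ₗ[R] E} (hf : Injective f)
    (hess : ∀ N : Submodule R E, N ≠ ⊥ → N ⊓ LinearMap.range f ≠ ⊥) :
    associatedPrimes R E ⊆ {p} := by
  intro Q hQ
  obtain ⟨hQprime, g, hg⟩ := (isAssociatedPrime_iff_exists_injective_linearMap Q E).mp hQ
  have : Nontrivial (R ⧸ Q) := Ideal.Quotient.nontrivial_iff.mpr hQprime.ne_top
  have hrange : LinearMap.range g ≠ ⊥ :=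
    (Submodule.ne_bot_iff _).mpr
      ⟨g 1, LinearMap.mem_range_self g 1, (map_ne_zero_iff g hg).mpr one_ne_zero⟩
  obtain ⟨w, hw, hw0⟩ := (Submodule.ne_bot_iff _).mp (hess _ hrange)
  obtain ⟨⟨a, rfl⟩, ⟨b, hb⟩⟩ := Submodule.mem_inf.mp hw
  have ha0 : a ≠ 0 := by rintro rfl; exact hw0 (map_zero g)
  have hb0 : b ≠ 0 := by rintro rfl; exact hw0 (by rw [← hb, map_zero])
  rw [Set.mem_singleton_iff, ← torsionOf_apply_eq_of_injective hg ha0, ← hb,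
    torsionOf_apply_eq_of_injective hf hb0]

theorem exists_pow_le_torsionOf_of_associatedPrimes_subset [IsNoetherianRing R] {p : Ideal R}
    (h : associatedPrimes R E ⊆ {p}) (x : E) : ∃ n : ℕ, p ^ n ≤ Ideal.torsionOf R E x := by
  set I := Ideal.torsionOf R E x
  let e := Ideal.quotTorsionOfEquivSpanSingleton R E x
  have hI : associatedPrimes R (R ⧸ I) ⊆ {p} :=
    (associatedPrimes.subset_of_injective (f := (R ∙ x).subtype ∘ₗ e.toLinearMap)
      ((Submodule.injective_subtype _).comp e.injective)).trans h
  have hrad : p ≤ I.radical := by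
    rw [← Ideal.sInf_minimalPrimes]
    refine le_sInf fun Q hQ => (hI ?_).ge
    apply Module.associatedPrimes.minimalPrimes_annihilator_subset_associatedPrimes
    rwa [Ideal.annihilator_quotient]
  exact Ideal.exists_pow_le_of_le_radical_of_fg hrad (IsNoetherian.noetherian p)

end AssociatedPrimes

section AdicCompletionAction

open AdicCompletion

variable {R E : Type*} [CommRing R] {p : Ideal R} [AddCommGroup E] [Module R E]

theorem mk_eq_evalₐ_of_le {k m : ℕ} (hkm : k ≤ m) {a : AdicCompletion p R} {r : R}
    (h : Ideal.Quotient.mk (p ^ m) r = evalₐ p m a) :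
    Ideal.Quotient.mk (p ^ k) r = evalₐ p k a := by
  obtain ⟨f, rfl⟩ := AdicCompletion.mk_surjective p R a
  rw [evalₐ_mk, Ideal.Quotient.eq] at h ⊢
  have hcauchy : f.val m - f.val k ∈ p ^ k := by
    simpa [SModEq.sub_mem] using (f.property hkm).symm
  simpa using add_mem (Ideal.pow_le_pow_right hkm h) hcauchy

theorem smul_eq_smul_of_mk_eq {I : Ideal R} {x : E} (hx : ∀ c ∈ I, c • x = 0) {r s : R}
    (h : Ideal.Quotient.mk I r = Ideal.Quotient.mk I s) : r • x = s • x := by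
  rw [← sub_eq_zero, ← sub_smul]
  exact hx _ (Ideal.Quotient.eq.mp h)

theorem mk_eq_evalₐ_of_sub_mem {n : ℕ} {a : AdicCompletion p R} {r : R}
    (h : a - algebraMap R (AdicCompletion p R) r ∈
      (p ^ n).map (algebraMap R (AdicCompletion p R))) :
    Ideal.Quotient.mk (p ^ n) r = evalₐ p n a := by
  have hker : (p ^ n).map (algebraMap R (AdicCompletion p R)) ≤ RingHom.ker (evalₐ p n) :=
    Ideal.map_le_iff_le_comap.mpr fun c hc => by
      simpa [Ideal.Quotient.eq_zero_iff_mem] using hc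
  have := hker h
  rwa [RingHom.mem_ker, map_sub, sub_eq_zero, AlgHom.commutes, Ideal.Quotient.algebraMap_eq,
    eq_comm] at this

variable (htors : ∀ x : E, ∃ n : ℕ, ∀ c ∈ p ^ n, c • x = 0)
include htors

noncomputable def adicSMul (a : AdicCompletion p R) (x : E) : E :=
  surjInv Ideal.Quotient.mk_surjective (evalₐ p (htors x).choose a) • x

theorem adicSMul_eq_smul {a : AdicCompletion p R} {x : E} {n : ℕ} {r : R}
    (hx : ∀ c ∈ p ^ n, c • x = 0) (hr : Ideal.Quotient.mk (p ^ n) r = evalₐ p n a) :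
    adicSMul htors a x = r • x := by
  have hm := (htors x).choose_spec
  have hs := surjInv_eq Ideal.Quotient.mk_surjective (evalₐ p (htors x).choose a)
  have hmin : ∀ c ∈ p ^ min (htors x).choose n, c • x = 0 := by
    rcases min_choice (htors x).choose n with h | h <;> rwa [h]
  refine smul_eq_smul_of_mk_eq hmin ?_
  rw [mk_eq_evalₐ_of_le (min_le_left _ _) hs, mk_eq_evalₐ_of_le (min_le_right _ _) hr]

@[reducible]
noncomputable def adicModule : Module (AdicCompletion p R) E where
  smul := adicSMul htors
  one_smul x := by
    obtain ⟨n, hx⟩ := htors x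
    exact (adicSMul_eq_smul htors hx (by rw [map_one, map_one])).trans (one_smul R x)
  mul_smul a b x := by
    obtain ⟨n, hx⟩ := htors x
    obtain ⟨r, hr⟩ := Ideal.Quotient.mk_surjective (evalₐ p n a)
    obtain ⟨s, hs⟩ := Ideal.Quotient.mk_surjective (evalₐ p n b)
    have hsx : ∀ c ∈ p ^ n, c • s • x = 0 := fun c hc => by rw [smul_comm, hx c hc, smul_zero]
    change adicSMul htors (a * b) x = adicSMul htors a (adicSMul htors b x)
    rw [adicSMul_eq_smul htors hx hs, adicSMul_eq_smul htors hsx hr,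
      adicSMul_eq_smul htors hx (r := r * s) (by rw [map_mul, map_mul, hr, hs]), mul_smul]
  smul_zero a := smul_zero _
  smul_add a x y := by
    obtain ⟨n, hx⟩ := htors x
    obtain ⟨m, hy⟩ := htors y
    obtain ⟨r, hr⟩ := Ideal.Quotient.mk_surjective (evalₐ p (max n m) a)
    have hx' : ∀ c ∈ p ^ max n m, c • x = 0 := fun c hc =>
      hx c (Ideal.pow_le_pow_right (le_max_left n m) hc)
    have hy' : ∀ c ∈ p ^ max n m, c • y = 0 := fun c hc =>
      hy c (Ideal.pow_le_pow_right (le_max_right n m) hc)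
    have hxy : ∀ c ∈ p ^ max n m, c • (x + y) = 0 := fun c hc => by
      rw [smul_add, hx' c hc, hy' c hc, add_zero]
    change adicSMul htors a (x + y) = adicSMul htors a x + adicSMul htors a y
    rw [adicSMul_eq_smul htors hxy hr, adicSMul_eq_smul htors hx' hr,
      adicSMul_eq_smul htors hy' hr, smul_add]
  add_smul a b x := by
    obtain ⟨n, hx⟩ := htors x
    obtain ⟨r, hr⟩ := Ideal.Quotient.mk_surjective (evalₐ p n a)
    obtain ⟨s, hs⟩ := Ideal.Quotient.mk_surjective (evalₐ p n b)
    change adicSMul htors (a + b) x = adicSMul htors a x + adicSMul htors b x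
    rw [adicSMul_eq_smul htors hx hr, adicSMul_eq_smul htors hx hs,
      adicSMul_eq_smul htors hx (r := r + s) (by rw [map_add, map_add, hr, hs]), add_smul]
  zero_smul x := by
    obtain ⟨n, hx⟩ := htors x
    exact (adicSMul_eq_smul htors hx (by rw [_root_.map_zero, _root_.map_zero])).trans
      (zero_smul R x)

theorem isCanonicalCompletionStructure_adicModule :
    @IsCanonicalCompletionStructure R _ p E _ _ (adicModule htors) := by
  let := adicModule htors
  refine ⟨fun r x => ?_, fun a x n r hx h => adicSMul_eq_smul htors hx (mk_eq_evalₐ_of_sub_mem h)⟩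
  obtain ⟨n, hx⟩ := htors x
  exact adicSMul_eq_smul htors hx (by rw [AlgHom.commutes, Ideal.Quotient.algebraMap_eq])

end AdicCompletionAction

theorem injective_hull_admits_adic_completion_module_structure_general
    {R : Type*} [CommRing R] [IsNoetherianRing R]
    (p : Ideal R) [p.IsPrime] {E : Type*} [AddCommGroup E] [Module R E]
    (f : (R ⧸ p) →ₗ[R] E) (hf : IsInjectiveHull R f) :
    ∃ inst : Module (AdicCompletion p R) E,
      @IsCanonicalCompletionStructure R _ p E _ _ inst := by
  have htors : ∀ x : E, ∃ n : ℕ, ∀ c ∈ p ^ n, c • x = 0 := fun x =>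
    exists_pow_le_torsionOf_of_associatedPrimes_subset
      (associatedPrimes_subset_singleton_of_essential hf.2.1 hf.2.2) x
  exact ⟨adicModule htors, isCanonicalCompletionStructure_adicModule htors⟩

theorem injective_hull_admits_adic_completion_module_structure
    {R : Type*} [CommRing R] [IsNoetherianRing R] [IsLocalRing R]
    (p : Ideal R) [p.IsPrime] {E : Type*} [AddCommGroup E] [Module R E]
    (f : (R ⧸ p) →ₗ[R] E) (hf : IsInjectiveHull R f) :
    ∃ inst : Module (AdicCompletion p R) E,
      @IsCanonicalCompletionStructure R _ p E _ _ inst :=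
  injective_hull_admits_adic_completion_module_structure_general p f hf
end

section
/- Let $R$ be a Noetherian local ring and let $\mathfrak{q} \subseteq \mathfrak{p}$ be primes with $\mathfrak{q} \neq \mathfrak{p}$. Then $\operatorname{Hom}_R(E_R(R/\mathfrak{p}), E_R(R/\mathfrak{q})) = 0$. -/
/-- Every element of an injective hull of `R ⧸ p` is killed by a power of any `s ∈ p`. -/
lemma pow_smul_eq_zero_of_isInjectiveHull
    {R : Type*} [CommRing R] [IsNoetherianRing R]
    (p : Ideal R) {Ep : Type*} [AddCommGroup Ep] [Module R Ep]
    (fp : (R ⧸ p) →ₗ[R] Ep) (hfp : IsInjectiveHull R fp)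
    {s : R} (hs : s ∈ p) (z : Ep) : ∃ n : ℕ, s ^ n • z = 0 := by
  by_contra h
  push_neg at h
  obtain ⟨-, hinj, hess⟩ := hfp
  have hmono : Monotone fun n => (Submodule.span R {s ^ n • z}).annihilator := by
    apply monotone_nat_of_le_succ
    intro n a ha
    rw [Submodule.mem_annihilator_span_singleton] at ha ⊢
    rw [pow_succ, mul_comm, mul_smul, smul_comm, ha, smul_zero]
  obtain ⟨n, hn⟩ := monotone_stabilizes_iff_noetherian.mpr inferInstance
    (⟨fun n => (Submodule.span R {s ^ n • z}).annihilator, hmono⟩ : ℕ →o Ideal R)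
  set z' := s ^ n • z with hz'def
  have hz' : z' ≠ 0 := h n
  have hN : (Submodule.span R {z'}) ≠ ⊥ := by
    simpa [Submodule.span_singleton_eq_bot] using hz'
  obtain ⟨w, hwmem, hw0⟩ := (Submodule.ne_bot_iff _).1 (hess _ hN)
  obtain ⟨hw1, b, hb⟩ := hwmem
  obtain ⟨a, ha⟩ := Submodule.mem_span_singleton.mp hw1
  have hsb : s • b = 0 := by
    obtain ⟨c, rfl⟩ := Ideal.Quotient.mk_surjective b
    have : s • (Ideal.Quotient.mk p c) = Ideal.Quotient.mk p (s * c) := rfl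
    rw [this, Ideal.Quotient.eq_zero_iff_mem]
    exact p.mul_mem_right c hs
  have hsw : s • w = 0 := by
    rw [← hb, ← map_smul, hsb, map_zero]
  have hamem : a ∈ (Submodule.span R {s ^ (n + 1) • z}).annihilator := by
    rw [Submodule.mem_annihilator_span_singleton]
    calc a • s ^ (n + 1) • z = s • a • s ^ n • z := by
          rw [pow_succ, mul_comm, mul_smul, smul_comm]
      _ = s • w := by rw [← hz'def, ha]
      _ = 0 := hsw
  have : a ∈ (Submodule.span R {z'}).annihilator := by
    have heq : (Submodule.span R {s ^ n • z}).annihilator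
        = (Submodule.span R {s ^ (n + 1) • z}).annihilator := hn (n + 1) (Nat.le_succ n)
    rw [hz'def, heq]
    exact hamem
  rw [Submodule.mem_annihilator_span_singleton] at this
  exact hw0 (ha ▸ this)

theorem hom_between_injective_hulls_eq_zero
    {R : Type*} [CommRing R] [IsNoetherianRing R] [IsLocalRing R]
    (p q : Ideal R) [p.IsPrime] [q.IsPrime] (hqp : q ≤ p) (hne : q ≠ p)
    {Ep Eq : Type*} [AddCommGroup Ep] [Module R Ep] [AddCommGroup Eq] [Module R Eq]
    (fp : (R ⧸ p) →ₗ[R] Ep) (hfp : IsInjectiveHull R fp)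
    (fq : (R ⧸ q) →ₗ[R] Eq) (hfq : IsInjectiveHull R fq)
    (φ : Ep →ₗ[R] Eq) : φ = 0 := by
  by_contra hphi
  obtain ⟨-, hfqinj, hq_ess⟩ := hfq
  have hr : LinearMap.range φ ≠ ⊥ := fun h => hphi (LinearMap.range_eq_bot.mp h)
  obtain ⟨w, hwmem, hw0⟩ := (Submodule.ne_bot_iff _).1 (hq_ess _ hr)
  obtain ⟨⟨x, hx⟩, y, hy⟩ := hwmem
  obtain ⟨s, hsp, hsq⟩ := SetLike.exists_of_lt (lt_of_le_of_ne hqp hne)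
  obtain ⟨n, hnx⟩ := pow_smul_eq_zero_of_isInjectiveHull p fp hfp hsp x
  have hsny : s ^ n • y = 0 := by
    apply hfqinj
    rw [map_smul, hy, map_zero, ← hx, ← map_smul, hnx, map_zero]
  have hy0 : y ≠ 0 := by
    rintro rfl
    exact hw0 (by rw [← hy, map_zero])
  obtain ⟨c, rfl⟩ := Ideal.Quotient.mk_surjective y
  have : Ideal.Quotient.mk q (s ^ n * c) = 0 := hsny
  rw [Ideal.Quotient.eq_zero_iff_mem] at this
  rcases ‹q.IsPrime›.mem_or_mem this with h1 | h2
  · exact hsq (‹q.IsPrime›.mem_of_pow_mem n h1)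
  · exact hy0 (Ideal.Quotient.eq_zero_iff_mem.mpr h2)
end

section
/- Let $M$ be an $R$-module, $\phi' : F' \to M$ a flat precover and $\phi : F \to M$ a flat cover, with $\phi' = \phi \circ f$ for some $R$-linear $f : F' \to F$. Then $f$ is surjective and $\ker(f)$ is a direct summand of $F'$. -/
/-- `φ : F →ₗ[R] M` is a flat precover: `F` is flat and every map from a flat module to `M`
factors through `φ`. -/
def IsFlatPrecover {R : Type u} [CommRing R] {F M : Type u} [AddCommGroup F] [Module R F]
    [AddCommGroup M] [Module R M] (φ : F →ₗ[R] M) : Prop :=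
  Module.Flat R F ∧ ∀ (G : Type u) [AddCommGroup G] [Module R G], Module.Flat R G →
    ∀ g : G →ₗ[R] M, ∃ h : G →ₗ[R] F, φ ∘ₗ h = g

/-- `φ : F →ₗ[R] M` is a flat cover: a flat precover such that every endomorphism `f` of `F`
with `φ ∘ f = φ` is an automorphism. -/
def IsFlatCover {R : Type u} [CommRing R] {F M : Type u} [AddCommGroup F] [Module R F]
    [AddCommGroup M] [Module R M] (φ : F →ₗ[R] M) : Prop :=
  IsFlatPrecover φ ∧ ∀ f : F →ₗ[R] F, φ ∘ₗ f = φ → Function.Bijective f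

/-!
Since `F` is flat, the precover property of `φ'` gives `h : F → F'` with `φ' ∘ h = φ`. Then
`φ ∘ (f ∘ h) = φ`, so `f ∘ h` is an automorphism of `F` by the cover property, and
`e := h ∘ (f ∘ h)⁻¹` is a section of `f`. A map with a section is surjective, and its kernel is
complemented by the range of the section, because `e ∘ f` is an idempotent with that kernel
and range.
-/

namespace LinearMap

theorem exists_comp_eq_id_of_bijective_comp {R M N : Type*} [Semiring R] [AddCommMonoid M]
    [Module R M] [AddCommMonoid N] [Module R N] {f : M →ₗ[R] N} {h : N →ₗ[R] M}
    (hfh : Function.Bijective (f ∘ₗ h)) : ∃ e : N →ₗ[R] M, f ∘ₗ e = id := by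
  let g := LinearEquiv.ofBijective (f ∘ₗ h) hfh
  refine ⟨h ∘ₗ g.symm.toLinearMap, ?_⟩
  rw [← comp_assoc]
  exact g.comp_symm

theorem isCompl_ker_range_of_comp_eq_id {R M N : Type*} [Ring R] [AddCommGroup M] [Module R M]
    [AddCommGroup N] [Module R N] {f : M →ₗ[R] N} {e : N →ₗ[R] M}
    (hfe : f ∘ₗ e = id) : IsCompl (ker f) (range e) := by
  have hf : range f = ⊤ := range_eq_top.mpr (surjective_of_comp_eq_id e f hfe)
  have he : ker e = ⊥ := ker_eq_bot.mpr (injective_of_comp_eq_id e f hfe)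
  have hidem : IsIdempotentElem (e ∘ₗ f) := by
    rw [IsIdempotentElem, Module.End.mul_eq_comp, comp_assoc, ← comp_assoc f, hfe, id_comp]
  have hcompl := IsIdempotentElem.isCompl hidem
  rwa [range_comp_of_range_eq_top e hf, ker_comp_of_ker_eq_bot f he, isCompl_comm] at hcompl

end LinearMap

theorem IsFlatCover.exists_comp_eq_id_of_isFlatPrecover {R : Type u} [CommRing R]
    {F F' M : Type u} [AddCommGroup F] [Module R F] [AddCommGroup F'] [Module R F']
    [AddCommGroup M] [Module R M] {φ' : F' →ₗ[R] M} {φ : F →ₗ[R] M} {f : F' →ₗ[R] F}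
    (hcov : IsFlatCover φ) (hpre : IsFlatPrecover φ') (hfac : φ ∘ₗ f = φ') :
    ∃ e : F →ₗ[R] F', f ∘ₗ e = LinearMap.id := by
  obtain ⟨⟨hF, -⟩, hauto⟩ := hcov
  obtain ⟨h, hh⟩ := hpre.2 F hF φ
  have hφ : φ ∘ₗ (f ∘ₗ h) = φ := by rw [← LinearMap.comp_assoc, hfac, hh]
  exact LinearMap.exists_comp_eq_id_of_bijective_comp (hauto _ hφ)

theorem flat_precover_to_flat_cover_surjective_and_kernel_summand
    {R : Type u} [CommRing R] {F F' M : Type u} [AddCommGroup F] [Module R F]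
    [AddCommGroup F'] [Module R F'] [AddCommGroup M] [Module R M]
    (φ' : F' →ₗ[R] M) (φ : F →ₗ[R] M) (f : F' →ₗ[R] F)
    (hpre : IsFlatPrecover φ') (hcov : IsFlatCover φ) (hfac : φ ∘ₗ f = φ') :
    Function.Surjective f ∧ ∃ N : Submodule R F', IsCompl (LinearMap.ker f) N := by
  obtain ⟨e, hfe⟩ := hcov.exists_comp_eq_id_of_isFlatPrecover hpre hfac
  exact ⟨LinearMap.surjective_of_comp_eq_id e f hfe, _,
    LinearMap.isCompl_ker_range_of_comp_eq_id hfe⟩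
end
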